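/- Let (W,S) be a Coxeter system, J ⊆ S, and u, v ∈ W^J with u < v. For every y ∈ [u,v] with y^J > u, there exists a ∈ W^J with u ⋖ a ≤ y^J; in particular there is an atom a ∈ A^J_{u,v} with a ≤ y. -/

import Mathlib

/-!
Induction on `ℓ(w)` shows that every `u < w` in `Wᴶ` is covered by some `a ∈ Wᴶ` with `a ≤ w`.
Take a left descent `s` of `w`; then `s w ∈ Wᴶ` and `s w ≤ w`. If `u ≤ s w`, recurse on `s w`.
Otherwise the lifting property forces `s u < u`, and recursion gives `a'` covering `s u` below
`s w`; then `a = s a'` works. That `a` stays in `Wᴶ` is the delicate point: otherwise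
`s a' = u sⱼ` with `j ∈ J`, which puts `a'` in the coset of `s u` and contradicts minimality.
Applied to `w = yᴶ ≤ y` this gives the atom.

Everything rests on the strong exchange property, which comes from the action of `W` on
`W × {±1}` in which `sᵢ` conjugates the first coordinate and flips the sign exactly at `sᵢ`.
-/
open Polynomial

namespace KL

variable {B W : Type*} [Group W] {M : CoxeterMatrix B}

/-- Bruhat order on a Coxeter group: reflexive-transitive closure of right
multiplication by a reflection that increases length. -/
def BruhatLE (cs : CoxeterSystem M W) : W → W → Prop :=
  Relation.ReflTransGen (fun x y =>
    ∃ t, cs.IsReflection t ∧ y = x * t ∧ cs.length x < cs.length y)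

def BruhatLT (cs : CoxeterSystem M W) (x y : W) : Prop :=
  BruhatLE cs x y ∧ x ≠ y

/-- Covering relation of Bruhat order. -/
def BruhatCovBy (cs : CoxeterSystem M W) (x y : W) : Prop :=
  BruhatLT cs x y ∧ ∀ z, BruhatLT cs x z → BruhatLT cs z y → False

/-- The Bruhat interval `[u, v]`. -/
def BruhatInterval (cs : CoxeterSystem M W) (u v : W) : Set W :=
  {y | BruhatLE cs u y ∧ BruhatLE cs y v}

/-- The standard parabolic subgroup `W_J`. -/
def ParabolicSubgroup (cs : CoxeterSystem M W) (J : Set B) : Subgroup W :=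
  Subgroup.closure (cs.simple '' J)

/-- `w` is the minimal-length representative of its coset `w * W_J`,
i.e. `w ∈ Wᴶ`. -/
def IsMinRep (cs : CoxeterSystem M W) (J : Set B) (w : W) : Prop :=
  ∀ x ∈ ParabolicSubgroup cs J, cs.length w ≤ cs.length (w * x)

/-- The set `Aᴶ_{u,v}` of atoms of `[u,v]` lying in `Wᴶ`. -/
def AtomSet (cs : CoxeterSystem M W) (J : Set B) (u v : W) : Set W :=
  {a | IsMinRep cs J a ∧ BruhatCovBy cs u a ∧ BruhatLE cs a v}

/-- The parabolic quotient interval `[u,v]ᴶ = [u,v] ∩ Wᴶ`. -/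
def QuotInterval (cs : CoxeterSystem M W) (J : Set B) (u v : W) : Set W :=
  {y | IsMinRep cs J y ∧ BruhatLE cs u y ∧ BruhatLE cs y v}

/-- The family of ordinary Kazhdan–Lusztig `R`-polynomials, characterized by
its defining recursion. -/
def IsRFamily (cs : CoxeterSystem M W) (R : W → W → Polynomial ℤ) : Prop :=
  (∀ u v, ¬ BruhatLE cs u v → R u v = 0) ∧
  (∀ u, R u u = 1) ∧
  (∀ (i : B) (u v : W), cs.length (cs.simple i * v) < cs.length v →
    (cs.length (cs.simple i * u) < cs.length u →
      R u v = R (cs.simple i * u) (cs.simple i * v)) ∧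
    (cs.length u < cs.length (cs.simple i * u) →
      R u v = (X - 1) * R u (cs.simple i * v)
            + X * R (cs.simple i * u) (cs.simple i * v)))

/-- The family of ordinary Kazhdan–Lusztig polynomials `P_{u,v}`, characterized
by its defining properties, relative to a family `R` of `R`-polynomials. -/
def IsPFamily (cs : CoxeterSystem M W) (R P : W → W → Polynomial ℤ) : Prop :=
  (∀ u v, ¬ BruhatLE cs u v → P u v = 0) ∧
  (∀ u, P u u = 1) ∧
  (∀ u v, BruhatLT cs u v →
    2 * (P u v).natDegree + 1 ≤ cs.length v - cs.length u) ∧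
  (∀ u v, BruhatLE cs u v →
    (P u v).reflect (cs.length v - cs.length u) =
      ∑ᶠ σ ∈ BruhatInterval cs u v, R u σ * P σ v)

/-- The family of parabolic `R`-polynomials `R^{J,x}_{u,v}` of Deodhar,
characterized by its defining recursion. -/
def IsParaRFamily (cs : CoxeterSystem M W) (J : Set B) (x : Polynomial ℤ)
    (R : W → W → Polynomial ℤ) : Prop :=
  (∀ u v, IsMinRep cs J u → IsMinRep cs J v → ¬ BruhatLE cs u v → R u v = 0) ∧
  (∀ u, IsMinRep cs J u → R u u = 1) ∧
  (∀ (i : B) (u v : W), IsMinRep cs J u → IsMinRep cs J v →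
    cs.length (cs.simple i * v) < cs.length v →
    (cs.length (cs.simple i * u) < cs.length u →
      R u v = R (cs.simple i * u) (cs.simple i * v)) ∧
    (cs.length u < cs.length (cs.simple i * u) →
      IsMinRep cs J (cs.simple i * u) →
      R u v = (X - 1) * R u (cs.simple i * v)
            + X * R (cs.simple i * u) (cs.simple i * v)) ∧
    (cs.length u < cs.length (cs.simple i * u) →
      ¬ IsMinRep cs J (cs.simple i * u) →
      R u v = (X - 1 - x) * R u (cs.simple i * v)))

/-- The family of parabolic Kazhdan–Lusztig polynomials `P^{J,x}_{u,v}` of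
Deodhar, characterized by its defining properties, relative to a family `R`
of parabolic `R`-polynomials. -/
def IsParaPFamily (cs : CoxeterSystem M W) (J : Set B)
    (R P : W → W → Polynomial ℤ) : Prop :=
  (∀ u v, IsMinRep cs J u → IsMinRep cs J v → ¬ BruhatLE cs u v → P u v = 0) ∧
  (∀ u, IsMinRep cs J u → P u u = 1) ∧
  (∀ u v, IsMinRep cs J u → IsMinRep cs J v → BruhatLT cs u v →
    2 * (P u v).natDegree + 1 ≤ cs.length v - cs.length u) ∧
  (∀ u v, IsMinRep cs J u → IsMinRep cs J v → BruhatLE cs u v →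
    (P u v).reflect (cs.length v - cs.length u) =
      ∑ᶠ σ ∈ QuotInterval cs J u v, R u σ * P σ v)

section StrongExchange

open scoped Classical

variable (cs : CoxeterSystem M W)

lemma conj_eq_iff_eq_conj_inv (a t c : W) : a * t * a⁻¹ = c ↔ t = a⁻¹ * c * a := by
  constructor <;> rintro rfl <;> group

lemma simple_mul_mul_simple_eq_simple_iff (i : B) (t : W) :
    cs.simple i * t * cs.simple i = cs.simple i ↔ t = cs.simple i := by
  simpa [cs.inv_simple] using conj_eq_iff_eq_conj_inv (cs.simple i) t (cs.simple i)

noncomputable def reflSignPermFun (i : B) (p : W × ℤˣ) : W × ℤˣ :=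
  (cs.simple i * p.1 * cs.simple i, if p.1 = cs.simple i then -p.2 else p.2)

lemma reflSignPermFun_involutive (i : B) : Function.Involutive (reflSignPermFun cs i) := by
  rintro ⟨t, e⟩
  have hconj : cs.simple i * (cs.simple i * t * cs.simple i) * cs.simple i = t := by
    simp [← mul_assoc]
  by_cases h : t = cs.simple i
  · subst h
    simp [reflSignPermFun]
  · have h' : cs.simple i * t * cs.simple i ≠ cs.simple i :=
      fun h' => h ((simple_mul_mul_simple_eq_simple_iff cs i t).1 h')
    simp only [reflSignPermFun, if_neg h, if_neg h', hconj]

noncomputable def reflSignPerm (i : B) : Equiv.Perm (W × ℤˣ) :=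
  (reflSignPermFun_involutive cs i).toPerm

lemma reflSignPerm_apply (i : B) (p : W × ℤˣ) :
    reflSignPerm cs i p =
      (cs.simple i * p.1 * cs.simple i, if p.1 = cs.simple i then -p.2 else p.2) :=
  rfl

lemma simple_mul_pow_eq_inv_pow_mul_simple (i j : B) (n : ℕ) :
    cs.simple j * (cs.simple i * cs.simple j) ^ n =
      ((cs.simple i * cs.simple j) ^ n)⁻¹ * cs.simple j := by
  induction n with
  | zero => simp
  | succ n ih =>
    rw [pow_succ, ← mul_assoc, ih, ← pow_succ, pow_succ', mul_inv_rev, mul_inv_rev, cs.inv_simple,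
      cs.inv_simple]
    group

lemma reflSignPerm_mul_pow_apply (i j : B) (k : ℕ) (t : W) (e : ℤˣ) :
    ((reflSignPerm cs i * reflSignPerm cs j) ^ k) (t, e) =
      ((cs.simple i * cs.simple j) ^ k * t * ((cs.simple i * cs.simple j) ^ k)⁻¹,
        e * ∏ r ∈ Finset.range (2 * k),
          if t = ((cs.simple i * cs.simple j) ^ r)⁻¹ * cs.simple j then -1 else 1) := by
  set g := cs.simple i * cs.simple j
  have hswap : ∀ n : ℕ, cs.simple j * g ^ n = (g ^ n)⁻¹ * cs.simple j :=
    simple_mul_pow_eq_inv_pow_mul_simple cs i j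
  have hj : ∀ n : ℕ, g ^ n * t * (g ^ n)⁻¹ = cs.simple j ↔ t = (g ^ (2 * n))⁻¹ * cs.simple j := by
    intro n
    rw [conj_eq_iff_eq_conj_inv, mul_assoc, hswap, two_mul, pow_add, mul_inv_rev, mul_assoc]
  have hi : ∀ n : ℕ, cs.simple j * (g ^ n * t * (g ^ n)⁻¹) * cs.simple j = cs.simple i ↔
      t = (g ^ (2 * n + 1))⁻¹ * cs.simple j := by
    intro n
    have hg : cs.simple j * cs.simple i = g⁻¹ := by simp [g, cs.inv_simple]
    have e : (g ^ n)⁻¹ * (cs.simple j * cs.simple i * cs.simple j) * g ^ n =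
        (g ^ (2 * n + 1))⁻¹ * cs.simple j := by
      calc (g ^ n)⁻¹ * (cs.simple j * cs.simple i * cs.simple j) * g ^ n
          = (g ^ n)⁻¹ * (cs.simple j * cs.simple i) * (cs.simple j * g ^ n) := by group
        _ = (g ^ (2 * n + 1))⁻¹ * cs.simple j := by
          rw [hswap, hg, show 2 * n + 1 = n + 1 + n by ring, pow_add, pow_succ]
          group
    have hconj : ∀ x : W, cs.simple j * x * cs.simple j = cs.simple i ↔
        x = cs.simple j * cs.simple i * cs.simple j := fun x => by
      simpa [cs.inv_simple] using conj_eq_iff_eq_conj_inv (cs.simple j) x (cs.simple i)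
    rw [hconj, conj_eq_iff_eq_conj_inv, e]
  induction k with
  | zero => simp
  | succ k ih =>
    rw [pow_succ', Equiv.Perm.mul_apply, ih, Equiv.Perm.mul_apply, reflSignPerm_apply,
      reflSignPerm_apply]
    simp only [if_congr (hj k) rfl rfl, if_congr (hi k) rfl rfl, Prod.mk.injEq]
    constructor
    · rw [pow_succ', mul_inv_rev]
      simp only [g, mul_inv_rev, cs.inv_simple]
      group
    · rw [show 2 * (k + 1) = 2 * k + 1 + 1 by ring, Finset.prod_range_succ,
        Finset.prod_range_succ]
      split_ifs <;> simp

lemma isLiftable_reflSignPerm : M.IsLiftable (reflSignPerm cs) := by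
  intro i j
  set g := cs.simple i * cs.simple j
  have hg : g ^ M i j = 1 := cs.simple_mul_simple_pow i j
  ext1 ⟨t, e⟩
  -- The reflections `g⁻ʳ sⱼ` are periodic in `r` with period `M i j`, so each occurs evenly often.
  have hprod : ∏ r ∈ Finset.range (M i j + M i j),
      (if t = (g ^ r)⁻¹ * cs.simple j then (-1 : ℤˣ) else 1) = 1 := by
    simp only [Finset.prod_range_add, pow_add, hg, one_mul, Int.units_mul_self]
  rw [reflSignPerm_mul_pow_apply, two_mul, hprod, hg]
  simp

noncomputable def reflSignRep : W →* Equiv.Perm (W × ℤˣ) :=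
  cs.lift ⟨reflSignPerm cs, isLiftable_reflSignPerm cs⟩

lemma reflSignRep_simple (i : B) : reflSignRep cs (cs.simple i) = reflSignPerm cs i :=
  cs.lift_apply_simple (isLiftable_reflSignPerm cs) i

/-- By `reflSign_wordProd`, the parity of the number of occurrences of `t` in the right
inversion sequence of a word for `w`; that this does not depend on the word is the point. -/
noncomputable def reflSign (w t : W) : ℤˣ := (reflSignRep cs w (t, 1)).2

lemma reflSignRep_wordProd (ω : List B) (t : W) (e : ℤˣ) :
    reflSignRep cs (cs.wordProd ω) (t, e) =
      (cs.wordProd ω * t * (cs.wordProd ω)⁻¹, e * (-1) ^ (cs.rightInvSeq ω).count t) := by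
  induction ω generalizing e with
  | nil => simp
  | cons i ω ih =>
    have hris : cs.rightInvSeq (i :: ω) =
        ((cs.wordProd ω)⁻¹ * cs.simple i * cs.wordProd ω) :: cs.rightInvSeq ω := rfl
    rw [cs.wordProd_cons, map_mul, Equiv.Perm.mul_apply, ih, reflSignRep_simple,
      reflSignPerm_apply, hris, List.count_cons]
    simp only [conj_eq_iff_eq_conj_inv, Prod.mk.injEq, mul_inv_rev, cs.inv_simple, beq_iff_eq]
    constructor
    · group
    · by_cases h : t = (cs.wordProd ω)⁻¹ * cs.simple i * cs.wordProd ω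
      · simp [h, pow_succ]
      · simp [h, Ne.symm h]

lemma reflSignRep_apply (w t : W) (e : ℤˣ) :
    reflSignRep cs w (t, e) = (w * t * w⁻¹, e * reflSign cs w t) := by
  obtain ⟨ω, rfl⟩ := cs.wordProd_surjective w
  simp [reflSign, reflSignRep_wordProd]

lemma reflSign_wordProd (ω : List B) (t : W) :
    reflSign cs (cs.wordProd ω) t = (-1) ^ (cs.rightInvSeq ω).count t := by
  simp [reflSign, reflSignRep_wordProd]

lemma mem_rightInvSeq_of_reflSign_eq_neg_one {ω : List B} {t : W}
    (h : reflSign cs (cs.wordProd ω) t = -1) : t ∈ cs.rightInvSeq ω := by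
  by_contra hmem
  rw [reflSign_wordProd, List.count_eq_zero.mpr hmem, pow_zero] at h
  exact absurd h (by decide)

lemma length_mul_lt_of_reflSign_eq_neg_one {w t : W} (h : reflSign cs w t = -1) :
    cs.length (w * t) < cs.length w := by
  obtain ⟨ω, hω, rfl⟩ := cs.exists_isReduced w
  exact (cs.isRightInversion_of_mem_rightInvSeq hω
    (mem_rightInvSeq_of_reflSign_eq_neg_one cs h)).2

lemma reflSign_self {t : W} (ht : cs.IsReflection t) : reflSign cs t t = -1 := by
  obtain ⟨u, i, rfl⟩ := ht
  set t := u * cs.simple i * u⁻¹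
  have hinv : reflSignRep cs u⁻¹ (t, 1) = (cs.simple i, reflSign cs u⁻¹ t) := by
    rw [reflSignRep_apply, one_mul]
    simp [t, mul_assoc]
  have hcancel : reflSign cs u⁻¹ t * reflSign cs u (cs.simple i) = 1 := by
    have h : reflSignRep cs u (reflSignRep cs u⁻¹ (t, 1)) = (t, 1) := by
      rw [← Equiv.Perm.mul_apply, ← map_mul, mul_inv_cancel, map_one, Equiv.Perm.one_apply]
    rw [hinv, reflSignRep_apply] at h
    exact congrArg Prod.snd h
  have hfac : reflSignRep cs t = reflSignRep cs u * reflSignPerm cs i * reflSignRep cs u⁻¹ := by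
    simp [t, reflSignRep_simple]
  rw [reflSign, hfac, Equiv.Perm.mul_apply, Equiv.Perm.mul_apply, hinv, reflSignPerm_apply,
    if_pos rfl, reflSignRep_apply]
  simp only [cs.simple_mul_simple_self, one_mul, neg_mul, hcancel]

lemma reflSign_mul_self (w : W) {t : W} (ht : cs.IsReflection t) :
    reflSign cs (w * t) t = -reflSign cs w t := by
  have h : reflSignRep cs t (t, 1) = (t, -1) := by
    rw [reflSignRep_apply, reflSign_self cs ht, ht.inv, ht.mul_self, one_mul, one_mul]
  rw [reflSign, map_mul, Equiv.Perm.mul_apply, h, reflSignRep_apply, neg_one_mul]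

lemma reflSign_eq_neg_one_of_length_mul_lt {w t : W} (ht : cs.IsReflection t)
    (h : cs.length (w * t) < cs.length w) : reflSign cs w t = -1 := by
  refine (Int.units_eq_one_or _).resolve_left fun h1 => ?_
  have h2 := length_mul_lt_of_reflSign_eq_neg_one cs (w := w * t)
    (by rw [reflSign_mul_self cs w ht, h1])
  rw [mul_assoc, ht.mul_self, mul_one] at h2
  omega

theorem strong_exchange (ω : List B) {t : W} (ht : cs.IsReflection t)
    (h : cs.length (cs.wordProd ω * t) < cs.length (cs.wordProd ω)) :
    ∃ k < ω.length, cs.wordProd ω * t = cs.wordProd (ω.eraseIdx k) := by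
  obtain ⟨k, hk, rfl⟩ := List.getElem_of_mem
    (mem_rightInvSeq_of_reflSign_eq_neg_one cs (reflSign_eq_neg_one_of_length_mul_lt cs ht h))
  refine ⟨k, by simpa using hk, ?_⟩
  have h := cs.wordProd_mul_getD_rightInvSeq ω k
  rwa [List.getD_eq_getElem _ _ hk] at h

end StrongExchange

section BruhatOrder

variable {cs : CoxeterSystem M W}

lemma BruhatLE.trans {x y z : W} (hxy : BruhatLE cs x y) (hyz : BruhatLE cs y z) :
    BruhatLE cs x z :=
  Relation.ReflTransGen.trans hxy hyz

lemma BruhatLE.length_le {x y : W} (h : BruhatLE cs x y) : cs.length x ≤ cs.length y := by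
  induction h with
  | refl => rfl
  | tail _ hstep ih =>
    obtain ⟨t, -, rfl, hlen⟩ := hstep
    exact ih.trans hlen.le

lemma BruhatLE.eq_of_length_le {x y : W} (h : BruhatLE cs x y)
    (hl : cs.length y ≤ cs.length x) : x = y := by
  rcases Relation.ReflTransGen.cases_tail h with rfl | ⟨z, hxz, t, -, rfl, hlen⟩
  · rfl
  · have := BruhatLE.length_le hxz
    omega

lemma bruhatLT_iff {x y : W} :
    BruhatLT cs x y ↔ BruhatLE cs x y ∧ cs.length x < cs.length y := by
  refine ⟨fun ⟨h, hne⟩ => ⟨h, lt_of_le_of_ne h.length_le fun hl => hne ?_⟩,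
    fun ⟨h, hl⟩ => ⟨h, by rintro rfl; omega⟩⟩
  exact h.eq_of_length_le hl.ge

lemma bruhatCovBy_of_length_eq_add_one {x y : W} (h : BruhatLE cs x y)
    (hl : cs.length y = cs.length x + 1) : BruhatCovBy cs x y := by
  refine ⟨bruhatLT_iff.mpr ⟨h, by omega⟩, fun z hxz hzy => ?_⟩
  have := (bruhatLT_iff.mp hxz).2
  have := (bruhatLT_iff.mp hzy).2
  omega

lemma bruhatLE_mul_of_length_lt {x t : W} (ht : cs.IsReflection t)
    (h : cs.length x < cs.length (x * t)) : BruhatLE cs x (x * t) :=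
  .single ⟨t, ht, rfl, h⟩

lemma bruhatLE_of_length_mul_lt {x t : W} (ht : cs.IsReflection t)
    (h : cs.length (x * t) < cs.length x) : BruhatLE cs (x * t) x := by
  have hxt : x * t * t = x := by rw [mul_assoc, ht.mul_self, mul_one]
  simpa [hxt] using bruhatLE_mul_of_length_lt ht (x := x * t) (by rwa [hxt])

lemma BruhatLE.inv {x y : W} (h : BruhatLE cs x y) : BruhatLE cs x⁻¹ y⁻¹ := by
  induction h with
  | refl => exact .refl
  | @tail b c _ hstep ih =>
    obtain ⟨t, ht, rfl, hlen⟩ := hstep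
    have heq : b⁻¹ * (b * t * b⁻¹) = (b * t)⁻¹ := by
      rw [mul_inv_rev, ht.inv]
      group
    exact ih.tail ⟨b * t * b⁻¹, ht.conj b, heq.symm, by rwa [cs.length_inv, cs.length_inv]⟩

lemma wordProd_eraseIdx_le {ρ : List B} (hρ : cs.IsReduced ρ) (k : ℕ) :
    BruhatLE cs (cs.wordProd (ρ.eraseIdx k)) (cs.wordProd ρ) := by
  by_cases hk : k < ρ.length
  · have ht : cs.IsReflection ((cs.rightInvSeq ρ).getD k 1) :=
      cs.isReflection_of_mem_rightInvSeq ρ <| by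
        rw [List.getD_eq_getElem _ _ (by simpa using hk)]
        exact List.getElem_mem _
    have hlen := cs.length_wordProd_le (ρ.eraseIdx k)
    rw [List.length_eraseIdx_of_lt hk] at hlen
    rw [← cs.wordProd_mul_getD_rightInvSeq ρ k] at hlen ⊢
    exact bruhatLE_of_length_mul_lt ht (by rw [hρ.eq]; omega)
  · rw [List.eraseIdx_of_length_le (not_lt.mp hk)]
    exact .refl

end BruhatOrder

section Lifting

variable {cs : CoxeterSystem M W}

/-- The strong exchange property applied to `z t = (z t sᵢ) sᵢ`, with a reduced word for `z t`
ending in `i`: the letter removed to reach `z` is either that last `i` or lies in front of it. -/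
lemma eq_or_mul_simple_le_of_length_lt {z t : W} {i : B} (ht : cs.IsReflection t)
    (hlen : cs.length z < cs.length (z * t))
    (hd : cs.length (z * t * cs.simple i) < cs.length (z * t)) :
    z = z * t * cs.simple i ∨ BruhatLE cs (z * cs.simple i) (z * t * cs.simple i) := by
  obtain ⟨ρ, hρ, hρeq⟩ := cs.exists_isReduced (z * t * cs.simple i)
  have hprod : cs.wordProd (ρ ++ [i]) = z * t := by
    rw [cs.wordProd_append, cs.wordProd_singleton, ← hρeq, cs.simple_mul_simple_cancel_right]
  have hred : cs.IsReduced (ρ ++ [i]) := by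
    have := cs.length_mul_simple (z * t) i
    rw [CoxeterSystem.IsReduced, hprod, List.length_append, List.length_singleton, ← hρ.eq,
      ← hρeq]
    omega
  obtain ⟨k, hk, hkeq⟩ := strong_exchange cs (ρ ++ [i]) ht <| by
    rwa [hprod, mul_assoc, ht.mul_self, mul_one]
  rw [hprod, mul_assoc, ht.mul_self, mul_one] at hkeq
  rcases lt_or_ge k ρ.length with hkρ | hkρ
  · right
    rw [List.eraseIdx_append_of_lt_length hkρ, cs.wordProd_append, cs.wordProd_singleton] at hkeq
    rw [hρeq, hkeq, cs.simple_mul_simple_cancel_right]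
    exact wordProd_eraseIdx_le hρ k
  · left
    obtain rfl : k = ρ.length := by simp at hk; omega
    rw [hρeq, hkeq, List.eraseIdx_append_of_length_le le_rfl]
    simp

lemma bruhatLE_mul_simple_mul_mul_simple {z t : W} (ht : cs.IsReflection t) {i : B}
    (h : cs.length (z * cs.simple i) < cs.length (z * t * cs.simple i)) :
    BruhatLE cs (z * cs.simple i) (z * t * cs.simple i) := by
  have hconj : z * cs.simple i * (cs.simple i * t * cs.simple i) = z * t * cs.simple i := by
    simp [mul_assoc]
  rw [← hconj] at h ⊢
  exact bruhatLE_mul_of_length_lt (by simpa [cs.inv_simple] using ht.conj (cs.simple i)) h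

/-- The lifting property. Its two halves are proved by a joint induction along the chain
`x ≤ y`: each half at `z` is needed for the other at `z t`. -/
lemma BruhatLE.lift_mul_simple {x y : W} (h : BruhatLE cs x y) (i : B) :
    (cs.length y < cs.length (y * cs.simple i) →
      BruhatLE cs (x * cs.simple i) (y * cs.simple i)) ∧
    (cs.length (y * cs.simple i) < cs.length y → BruhatLE cs (x * cs.simple i) y) := by
  induction h generalizing i with
  | refl =>
    exact ⟨fun _ => .refl, bruhatLE_of_length_mul_lt (cs.isReflection_simple i)⟩
  | @tail z y hxz hzy ih =>
    obtain ⟨t, ht, rfl, hzt⟩ := hzy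
    obtain ⟨ih₁, ih₂⟩ := ih i
    have hsi := cs.isReflection_simple i
    have hz := cs.length_mul_simple z i
    have hzt' := cs.length_mul_simple (z * t) i
    refine ⟨fun ha => ?_, fun hd => ?_⟩
    · rcases hz with hz | hz
      · exact (ih₁ (by omega)).trans (bruhatLE_mul_simple_mul_mul_simple ht (by omega))
      · exact (ih₂ (by omega)).trans ((bruhatLE_mul_of_length_lt ht hzt).trans
          (bruhatLE_mul_of_length_lt hsi ha))
    · rcases hz with hz | hz
      · rcases eq_or_mul_simple_le_of_length_lt ht hzt hd with hzeq | hle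
        · have : z * cs.simple i = z * t := by
            conv_lhs => rw [hzeq]
            simp
          exact this ▸ ih₁ (by omega)
        · exact ((ih₁ (by omega)).trans hle).trans (bruhatLE_of_length_mul_lt hsi hd)
      · exact (ih₂ (by omega)).trans (bruhatLE_mul_of_length_lt ht hzt)

lemma BruhatLE.mul_simple_le_mul_simple {x y : W} (h : BruhatLE cs x y) {i : B}
    (ha : cs.length y < cs.length (y * cs.simple i)) :
    BruhatLE cs (x * cs.simple i) (y * cs.simple i) :=
  (h.lift_mul_simple i).1 ha

lemma BruhatLE.mul_simple_le {x y : W} (h : BruhatLE cs x y) {i : B}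
    (hd : cs.length (y * cs.simple i) < cs.length y) : BruhatLE cs (x * cs.simple i) y :=
  (h.lift_mul_simple i).2 hd

lemma BruhatLE.le_mul_simple {x y : W} (h : BruhatLE cs x y) {i : B}
    (hd : cs.length (y * cs.simple i) < cs.length y)
    (ha : cs.length x < cs.length (x * cs.simple i)) : BruhatLE cs x (y * cs.simple i) := by
  induction h with
  | refl => omega
  | @tail z y hxz hzy ih =>
    obtain ⟨t, ht, rfl, hzt⟩ := hzy
    rcases cs.length_mul_simple z i with hz | hz
    · rcases eq_or_mul_simple_le_of_length_lt ht hzt hd with hzeq | hle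
      · exact hzeq ▸ hxz
      · exact (hxz.trans (bruhatLE_mul_of_length_lt (cs.isReflection_simple i) (by omega))).trans
          hle
    · have := cs.length_mul_simple (z * t) i
      exact (ih (by omega)).trans (bruhatLE_mul_simple_mul_mul_simple ht (by omega))

lemma BruhatLE.mul_simple_le_mul_simple_of_length_lt {x y : W} (h : BruhatLE cs x y) {i : B}
    (hd : cs.length (y * cs.simple i) < cs.length y)
    (hx : cs.length (x * cs.simple i) < cs.length x) :
    BruhatLE cs (x * cs.simple i) (y * cs.simple i) :=
  ((bruhatLE_of_length_mul_lt (cs.isReflection_simple i) hx).trans h).le_mul_simple hd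
    (by simpa using hx)

lemma length_inv_mul_simple (w : W) (i : B) :
    cs.length (w⁻¹ * cs.simple i) = cs.length (cs.simple i * w) := by
  rw [← cs.length_inv, mul_inv_rev, inv_inv, cs.inv_simple]

lemma BruhatLE.simple_mul_le_simple_mul {x y : W} (h : BruhatLE cs x y) {i : B}
    (ha : cs.length y < cs.length (cs.simple i * y)) :
    BruhatLE cs (cs.simple i * x) (cs.simple i * y) := by
  simpa [cs.inv_simple] using
    (h.inv.mul_simple_le_mul_simple (by rwa [length_inv_mul_simple, cs.length_inv])).inv

lemma BruhatLE.simple_mul_le {x y : W} (h : BruhatLE cs x y) {i : B}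
    (hd : cs.length (cs.simple i * y) < cs.length y) : BruhatLE cs (cs.simple i * x) y := by
  simpa [cs.inv_simple] using
    (h.inv.mul_simple_le (by rwa [length_inv_mul_simple, cs.length_inv])).inv

lemma BruhatLE.le_simple_mul {x y : W} (h : BruhatLE cs x y) {i : B}
    (hd : cs.length (cs.simple i * y) < cs.length y)
    (ha : cs.length x < cs.length (cs.simple i * x)) : BruhatLE cs x (cs.simple i * y) := by
  simpa [cs.inv_simple] using
    (h.inv.le_mul_simple (by rwa [length_inv_mul_simple, cs.length_inv])
      (by rwa [length_inv_mul_simple, cs.length_inv])).inv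

lemma BruhatLE.simple_mul_le_simple_mul_of_length_lt {x y : W} (h : BruhatLE cs x y) {i : B}
    (hd : cs.length (cs.simple i * y) < cs.length y)
    (hx : cs.length (cs.simple i * x) < cs.length x) :
    BruhatLE cs (cs.simple i * x) (cs.simple i * y) := by
  simpa [cs.inv_simple] using
    (h.inv.mul_simple_le_mul_simple_of_length_lt (by rwa [length_inv_mul_simple, cs.length_inv])
      (by rwa [length_inv_mul_simple, cs.length_inv])).inv

end Lifting

section Subword

variable {cs : CoxeterSystem M W}

lemma exists_reduced_sublist (ω : List B) :
    ∃ σ, σ.Sublist ω ∧ cs.IsReduced σ ∧ cs.wordProd σ = cs.wordProd ω := by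
  induction ω using List.reverseRecOn with
  | nil => exact ⟨[], .refl _, by simp [CoxeterSystem.IsReduced], rfl⟩
  | append_singleton ω i ih =>
    obtain ⟨σ, hσω, hσ, hσeq⟩ := ih
    have hprod : cs.wordProd (σ ++ [i]) = cs.wordProd (ω ++ [i]) := by
      simp [cs.wordProd_append, hσeq]
    rcases cs.length_mul_simple (cs.wordProd σ) i with hup | hdown
    · refine ⟨σ ++ [i], hσω.append (.refl _), ?_, hprod⟩
      rw [CoxeterSystem.IsReduced, cs.wordProd_append, cs.wordProd_singleton, hup, hσ.eq,
        List.length_append, List.length_singleton]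
    · obtain ⟨k, hk, hkeq⟩ := strong_exchange cs σ (cs.isReflection_simple i) (by omega)
      refine ⟨σ.eraseIdx k,
        ((List.eraseIdx_sublist σ k).trans hσω).trans (List.sublist_append_left _ _), ?_, ?_⟩
      · rw [CoxeterSystem.IsReduced, ← hkeq, List.length_eraseIdx_of_lt hk, ← hσ.eq]
        omega
      · rw [← hkeq, ← hprod, cs.wordProd_append, cs.wordProd_singleton]

lemma BruhatLE.exists_sublist {x w : W} (h : BruhatLE cs x w) {ρ : List B}
    (hρ : cs.IsReduced ρ) (hw : cs.wordProd ρ = w) :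
    ∃ σ, σ.Sublist ρ ∧ cs.wordProd σ = x := by
  induction h generalizing ρ with
  | refl => exact ⟨ρ, .refl ρ, hw⟩
  | @tail b c _ hstep ih =>
    obtain ⟨t, ht, rfl, hlen⟩ := hstep
    have hb : cs.wordProd ρ * t = b := by rw [hw, mul_assoc, ht.mul_self, mul_one]
    obtain ⟨k, -, hk⟩ := strong_exchange cs ρ ht (by rwa [hb, hw])
    obtain ⟨σ₁, hσ₁, hσ₁red, hσ₁eq⟩ := exists_reduced_sublist (cs := cs) (ρ.eraseIdx k)
    obtain ⟨σ, hσ, rfl⟩ := ih hσ₁red (by rw [hσ₁eq, ← hk, hb])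
    exact ⟨σ, hσ.trans (hσ₁.trans (List.eraseIdx_sublist ρ k)), rfl⟩

lemma bruhatLE_wordProd_of_sublist {ρ σ : List B} (hρ : cs.IsReduced ρ) (hσ : σ.Sublist ρ) :
    BruhatLE cs (cs.wordProd σ) (cs.wordProd ρ) := by
  induction ρ using List.reverseRecOn generalizing σ with
  | nil =>
    rw [List.sublist_nil.mp hσ]
    exact .refl
  | append_singleton ρ i ih =>
    have hρ' : cs.IsReduced ρ := by simpa using hρ.take ρ.length
    have hasc : cs.length (cs.wordProd ρ) < cs.length (cs.wordProd ρ * cs.simple i) := by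
      have := hρ.eq
      rw [cs.wordProd_append, cs.wordProd_singleton, List.length_append,
        List.length_singleton, ← hρ'.eq] at this
      omega
    obtain ⟨σ₁, σ₂, rfl, hσ₁, hσ₂⟩ := List.sublist_append_iff.mp hσ
    simp only [cs.wordProd_append, cs.wordProd_singleton]
    rcases List.sublist_singleton.mp hσ₂ with rfl | rfl
    · simpa using (ih hρ' hσ₁).trans (bruhatLE_mul_of_length_lt (cs.isReflection_simple i) hasc)
    · simpa using (ih hρ' hσ₁).mul_simple_le_mul_simple hasc

end Subword

section Parabolic

variable {cs : CoxeterSystem M W} {J : Set B}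

lemma simple_mem_parabolicSubgroup {j : B} (hj : j ∈ J) :
    cs.simple j ∈ ParabolicSubgroup cs J :=
  Subgroup.subset_closure ⟨j, hj, rfl⟩

lemma wordProd_mem_parabolicSubgroup {ω : List B} (hω : ∀ i ∈ ω, i ∈ J) :
    cs.wordProd ω ∈ ParabolicSubgroup cs J := by
  induction ω with
  | nil => simp
  | cons i ω ih =>
    rw [cs.wordProd_cons]
    exact mul_mem (simple_mem_parabolicSubgroup (hω i (by simp)))
      (ih fun j hj => hω j (by simp [hj]))

lemma exists_reduced_word_of_mem_parabolicSubgroup {x : W}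
    (hx : x ∈ ParabolicSubgroup cs J) :
    ∃ ω : List B, (∀ i ∈ ω, i ∈ J) ∧ cs.IsReduced ω ∧ cs.wordProd ω = x := by
  have : ∃ ω : List B, (∀ i ∈ ω, i ∈ J) ∧ cs.wordProd ω = x := by
    induction hx using Subgroup.closure_induction with
    | mem g hg =>
      obtain ⟨i, hi, rfl⟩ := hg
      exact ⟨[i], by simpa using hi, cs.wordProd_singleton i⟩
    | one => exact ⟨[], by simp, cs.wordProd_nil⟩
    | mul a b _ _ iha ihb =>
      obtain ⟨ωa, hωa, rfl⟩ := iha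
      obtain ⟨ωb, hωb, rfl⟩ := ihb
      exact ⟨ωa ++ ωb, fun i hi => (List.mem_append.mp hi).elim (hωa i) (hωb i),
        cs.wordProd_append ωa ωb⟩
    | inv a _ ih =>
      obtain ⟨ω, hω, rfl⟩ := ih
      exact ⟨ω.reverse, by simpa using hω, cs.wordProd_reverse ω⟩
  obtain ⟨ω, hω, rfl⟩ := this
  obtain ⟨σ, hσω, hσ, hσeq⟩ := exists_reduced_sublist (cs := cs) ω
  exact ⟨σ, fun i hi => hω i (hσω.subset hi), hσ, hσeq⟩

lemma IsMinRep.length_mul_wordProd {z : W} (hz : IsMinRep cs J z) {τ : List B}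
    (hτJ : ∀ i ∈ τ, i ∈ J) (hτ : cs.IsReduced τ) :
    cs.length (z * cs.wordProd τ) = cs.length z + τ.length := by
  induction τ using List.reverseRecOn with
  | nil => simp
  | append_singleton τ j ih =>
    have hτ' : cs.IsReduced τ := by simpa using hτ.take τ.length
    have hτJ' : ∀ i ∈ τ, i ∈ J := fun i hi => hτJ i (by simp [hi])
    have ih := ih hτJ' hτ'
    rw [cs.wordProd_append, cs.wordProd_singleton, ← mul_assoc, List.length_append,
      List.length_singleton]
    suffices hup : cs.length (z * cs.wordProd τ * cs.simple j) = cs.length (z * cs.wordProd τ) + 1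
      by omega
    refine (cs.length_mul_simple _ j).resolve_right fun hdown => ?_
    obtain ⟨ζ, hζ, rfl⟩ := cs.exists_isReduced z
    have hcat : cs.IsReduced (ζ ++ τ) := by
      rw [CoxeterSystem.IsReduced, cs.wordProd_append, ih, hζ.eq, List.length_append]
    obtain ⟨k, hk, hkeq⟩ := strong_exchange cs (ζ ++ τ) (cs.isReflection_simple j) <| by
      rw [cs.wordProd_append]
      omega
    rcases lt_or_ge k ζ.length with hkζ | hkζ
    · -- The letter deleted lies in `ζ`: then `z` is not minimal in its coset.
      rw [List.eraseIdx_append_of_lt_length hkζ, cs.wordProd_append, cs.wordProd_append] at hkeq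
      have hmem : cs.wordProd τ * cs.simple j * (cs.wordProd τ)⁻¹ ∈ ParabolicSubgroup cs J :=
        mul_mem (mul_mem (wordProd_mem_parabolicSubgroup hτJ')
          (simple_mem_parabolicSubgroup (hτJ j (by simp))))
          (inv_mem (wordProd_mem_parabolicSubgroup hτJ'))
      have hmin := hz _ hmem
      rw [show cs.wordProd ζ * (cs.wordProd τ * cs.simple j * (cs.wordProd τ)⁻¹) =
        cs.wordProd ζ * cs.wordProd τ * cs.simple j * (cs.wordProd τ)⁻¹ by group, hkeq,
        mul_inv_cancel_right] at hmin
      have hshort := cs.length_wordProd_le (ζ.eraseIdx k)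
      rw [List.length_eraseIdx_of_lt hkζ] at hshort
      have := hζ.eq
      omega
    · -- The letter deleted lies in `τ`: then `τ ++ [j]` is not reduced.
      rw [List.eraseIdx_append_of_length_le hkζ, cs.wordProd_append, cs.wordProd_append,
        mul_assoc, mul_right_inj] at hkeq
      have hshort := cs.length_wordProd_le (τ.eraseIdx (k - ζ.length))
      rw [List.length_eraseIdx_of_lt (by simp at hk; omega), ← hkeq, ← cs.wordProd_singleton,
        ← cs.wordProd_append, hτ.eq] at hshort
      simp at hshort
      omega

lemma IsMinRep.length_mul {z x : W} (hz : IsMinRep cs J z) (hx : x ∈ ParabolicSubgroup cs J) :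
    cs.length (z * x) = cs.length z + cs.length x := by
  obtain ⟨τ, hτJ, hτ, rfl⟩ := exists_reduced_word_of_mem_parabolicSubgroup hx
  rw [hz.length_mul_wordProd hτJ hτ, hτ.eq]

lemma IsMinRep.le_mul {z x : W} (hz : IsMinRep cs J z) (hx : x ∈ ParabolicSubgroup cs J) :
    BruhatLE cs z (z * x) := by
  obtain ⟨τ, hτJ, hτ, rfl⟩ := exists_reduced_word_of_mem_parabolicSubgroup hx
  clear hx
  induction τ using List.reverseRecOn with
  | nil =>
    rw [cs.wordProd_nil, mul_one]
    exact .refl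
  | append_singleton τ j ih =>
    have hτ' : cs.IsReduced τ := by simpa using hτ.take τ.length
    have hτJ' : ∀ i ∈ τ, i ∈ J := fun i hi => hτJ i (by simp [hi])
    have hlen := hz.length_mul_wordProd hτJ hτ
    rw [cs.wordProd_append, cs.wordProd_singleton, ← mul_assoc] at hlen ⊢
    refine (ih hτJ' hτ').trans
      (bruhatLE_mul_of_length_lt (cs.isReflection_simple j) ?_)
    rw [hlen, hz.length_mul_wordProd hτJ' hτ']
    simp

lemma IsMinRep.eq_of_inv_mul_mem {z z' : W} (hz : IsMinRep cs J z) (hz' : IsMinRep cs J z')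
    (h : z⁻¹ * z' ∈ ParabolicSubgroup cs J) : z = z' := by
  have h' : z'⁻¹ * z ∈ ParabolicSubgroup cs J := by simpa using inv_mem h
  have e := hz.length_mul h
  have e' := hz'.length_mul h'
  simp only [mul_inv_cancel_left] at e e'
  have : cs.length (z⁻¹ * z') = 0 := by omega
  rw [cs.length_eq_zero_iff, inv_mul_eq_one] at this
  exact this

lemma exists_isMinRep_inv_mul_mem (J : Set B) (w : W) :
    ∃ p, IsMinRep cs J p ∧ p⁻¹ * w ∈ ParabolicSubgroup cs J := by
  let S : Set W := ParabolicSubgroup cs J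
  have hS : S.Nonempty := ⟨1, (ParabolicSubgroup cs J).one_mem⟩
  let x₀ := Function.argminOn (fun x => cs.length (w * x)) S hS
  have hx₀ : x₀ ∈ ParabolicSubgroup cs J := Function.argminOn_mem _ S hS
  refine ⟨w * x₀, fun x hx => ?_, by simpa using inv_mem hx₀⟩
  rw [mul_assoc]
  exact Function.argminOn_le (fun x => cs.length (w * x)) S (mul_mem hx₀ hx)

lemma IsMinRep.simple_mul {w : W} (hw : IsMinRep cs J w) {i : B}
    (h : cs.length (cs.simple i * w) < cs.length w) : IsMinRep cs J (cs.simple i * w) := by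
  intro x hx
  have := hw.length_mul hx
  have := cs.length_simple_mul (w * x) i
  have := cs.length_simple_mul w i
  rw [mul_assoc]
  omega

lemma exists_eq_simple_of_mem_parabolicSubgroup_of_length_eq_one {x : W}
    (hx : x ∈ ParabolicSubgroup cs J) (hlen : cs.length x = 1) : ∃ j ∈ J, x = cs.simple j := by
  obtain ⟨τ, hτJ, hτ, rfl⟩ := exists_reduced_word_of_mem_parabolicSubgroup hx
  obtain ⟨j, rfl⟩ := List.length_eq_one_iff.mp (hτ.eq ▸ hlen)
  exact ⟨j, hτJ j (by simp), cs.wordProd_singleton j⟩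

/-- With `q = yᴶ`: `u ≤ y` implies `u ≤ yᴶ` for `u ∈ Wᴶ`. -/
lemma IsMinRep.le_of_le {u q y : W} (hu : IsMinRep cs J u) (hq : IsMinRep cs J q)
    (hqy : q⁻¹ * y ∈ ParabolicSubgroup cs J) (hle : BruhatLE cs u y) : BruhatLE cs u q := by
  obtain ⟨ρ, hρ, rfl⟩ := cs.exists_isReduced q
  obtain ⟨τ, hτJ, hτ, hτeq⟩ := exists_reduced_word_of_mem_parabolicSubgroup hqy
  have hy : cs.wordProd (ρ ++ τ) = y := by rw [cs.wordProd_append, hτeq, mul_inv_cancel_left]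
  have hρτ : cs.IsReduced (ρ ++ τ) := by
    rw [CoxeterSystem.IsReduced, cs.wordProd_append, hq.length_mul_wordProd hτJ hτ, hρ.eq,
      List.length_append]
  obtain ⟨σ, hσ, rfl⟩ := hle.exists_sublist hρτ hy
  obtain ⟨σ₁, σ₂, rfl, hσ₁, hσ₂⟩ := List.sublist_append_iff.mp hσ
  rw [cs.wordProd_append] at hu ⊢
  have hσ₂J : cs.wordProd σ₂ ∈ ParabolicSubgroup cs J :=
    wordProd_mem_parabolicSubgroup fun i hi => hτJ i (hσ₂.subset hi)
  have hle₁ : BruhatLE cs (cs.wordProd σ₁ * cs.wordProd σ₂) (cs.wordProd σ₁) := by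
    simpa using hu.le_mul (inv_mem hσ₂J)
  exact hle₁.trans (bruhatLE_wordProd_of_sublist hρ hσ₁)

lemma IsMinRep.exists_eq_mul_simple {u y : W} (hu : IsMinRep cs J u) (hle : BruhatLE cs u y)
    (hlen : cs.length y = cs.length u + 1) (hy : ¬IsMinRep cs J y) :
    ∃ j ∈ J, y = u * cs.simple j := by
  obtain ⟨p, hp, hpy⟩ := exists_isMinRep_inv_mul_mem (cs := cs) J y
  have hsplit := hp.length_mul hpy
  rw [mul_inv_cancel_left] at hsplit
  have hne : p⁻¹ * y ≠ 1 := fun h => hy (inv_mul_eq_one.mp h ▸ hp)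
  have hpos : cs.length (p⁻¹ * y) ≠ 0 := fun h => hne (cs.length_eq_zero_iff.mp h)
  obtain rfl : u = p :=
    (hu.le_of_le hp hpy hle).eq_of_length_le (by omega)
  obtain ⟨j, hj, hxj⟩ := exists_eq_simple_of_mem_parabolicSubgroup_of_length_eq_one hpy (by omega)
  exact ⟨j, hj, by rw [← hxj, mul_inv_cancel_left]⟩

end Parabolic

section Atoms

variable {cs : CoxeterSystem M W} {J : Set B}

lemma IsMinRep.simple_mul_of_le {u a : W} {i : B} (hu : IsMinRep cs J u)
    (hsu : IsMinRep cs J (cs.simple i * u)) (ha : IsMinRep cs J a)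
    (hlen : cs.length a = cs.length u) (hle : BruhatLE cs u (cs.simple i * a))
    (hlen' : cs.length (cs.simple i * a) = cs.length u + 1) :
    IsMinRep cs J (cs.simple i * a) := by
  by_contra hsa
  obtain ⟨j, hj, hsaj⟩ := hu.exists_eq_mul_simple hle hlen' hsa
  -- Now `a = sᵢ u sⱼ` lies in the coset of `sᵢ u`, whose minimal representative is `sᵢ u` itself.
  have ha_eq : a = cs.simple i * u * cs.simple j := by
    rw [mul_assoc, ← hsaj, cs.simple_mul_simple_cancel_left]
  have hsua : cs.simple i * u = a := hsu.eq_of_inv_mul_mem ha <| by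
    rw [ha_eq, inv_mul_cancel_left]
    exact simple_mem_parabolicSubgroup hj
  exact cs.length_simple_mul_ne u i (hsua ▸ hlen)

theorem exists_isMinRep_le_of_bruhatLT {u w : W} (hu : IsMinRep cs J u) (hw : IsMinRep cs J w)
    (huw : BruhatLT cs u w) :
    ∃ a, IsMinRep cs J a ∧ BruhatLE cs u a ∧ cs.length a = cs.length u + 1 ∧
      BruhatLE cs a w := by
  induction hn : cs.length w using Nat.strong_induction_on generalizing u w with
  | _ n ih =>
  obtain ⟨hle, hne⟩ := huw
  have hlt := (bruhatLT_iff.mp ⟨hle, hne⟩).2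
  obtain ⟨i, hdesc⟩ := cs.exists_leftDescent_of_ne_one (w := w) (by rintro rfl; simp at hlt)
  replace hdesc : cs.length (cs.simple i * w) < cs.length w := hdesc
  have hsw : IsMinRep cs J (cs.simple i * w) := hw.simple_mul hdesc
  have hsw_le : BruhatLE cs (cs.simple i * w) w := BruhatLE.simple_mul_le .refl hdesc
  have := cs.length_simple_mul w i
  by_cases hcase : BruhatLE cs u (cs.simple i * w)
  · by_cases hequ : u = cs.simple i * w
    · exact ⟨w, hw, hle, by subst hequ; omega, .refl⟩
    · obtain ⟨a, ha, hua, hlen, haw⟩ := ih _ (by omega) hu hsw ⟨hcase, hequ⟩ rfl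
      exact ⟨a, ha, hua, hlen, haw.trans hsw_le⟩
  · have hsu : cs.length (cs.simple i * u) < cs.length u := by
      have := cs.length_simple_mul_ne u i
      by_contra h
      exact hcase (hle.le_simple_mul hdesc (by omega))
    have hsu_min := hu.simple_mul hsu
    have := cs.length_simple_mul u i
    obtain ⟨a, ha, hsua, hlen, hasw⟩ := ih _ (by omega) hsu_min hsw
      ⟨hle.simple_mul_le_simple_mul_of_length_lt hdesc hsu, fun h => hne (mul_left_cancel h)⟩ rfl
    have hasc : cs.length a < cs.length (cs.simple i * a) := by
      have := cs.length_simple_mul_ne a i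
      by_contra h
      have hua : u = a := by
        simpa using (hsua.simple_mul_le (i := i) (by omega)).eq_of_length_le (by simp; omega)
      exact hcase (hua ▸ hasw)
    have hua : BruhatLE cs u (cs.simple i * a) := by
      simpa using hsua.simple_mul_le_simple_mul hasc
    have hsaw : BruhatLE cs (cs.simple i * a) w := by
      simpa using hasw.simple_mul_le_simple_mul (i := i) (by simpa using hdesc)
    have := cs.length_simple_mul a i
    exact ⟨cs.simple i * a, hu.simple_mul_of_le hsu_min ha (by omega) hua (by omega), hua,
      by omega, hsaw⟩

end Atoms

theorem exists_atom_le_general {B W : Type*} [Group W] {M : CoxeterMatrix B}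
    (cs : CoxeterSystem M W) (J : Set B) (u v : W)
    (hu : IsMinRep cs J u)
    (y : W) (hy : y ∈ BruhatInterval cs u v)
    (yJ : W) (hyJ : IsMinRep cs J yJ)
    (hyJmem : yJ⁻¹ * y ∈ ParabolicSubgroup cs J)
    (hgt : BruhatLT cs u yJ) :
    ∃ a : W, IsMinRep cs J a ∧ BruhatCovBy cs u a ∧ BruhatLE cs a yJ ∧
      a ∈ AtomSet cs J u v ∧ BruhatLE cs a y := by
  obtain ⟨a, ha, hua, hlen, hayJ⟩ := exists_isMinRep_le_of_bruhatLT hu hyJ hgt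
  have hcov : BruhatCovBy cs u a := bruhatCovBy_of_length_eq_add_one hua hlen
  have hay : BruhatLE cs a y := hayJ.trans (by simpa using hyJ.le_mul hyJmem)
  exact ⟨a, ha, hcov, hayJ, ⟨ha, hcov, hay.trans hy.2⟩, hay⟩

/-- for `u < v` in `Wᴶ` and `y ∈ [u,v]` with `yᴶ > u`, there is
an atom `a ∈ Wᴶ` with `u ⋖ a ≤ yᴶ`; in particular `a ∈ Aᴶ_{u,v}` and `a ≤ y`. -/
theorem exists_atom_le {B W : Type*} [Group W] {M : CoxeterMatrix B}
    (cs : CoxeterSystem M W) (J : Set B) (u v : W)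
    (hu : IsMinRep cs J u) (hv : IsMinRep cs J v) (huv : BruhatLT cs u v)
    (y : W) (hy : y ∈ BruhatInterval cs u v)
    (yJ : W) (hyJ : IsMinRep cs J yJ)
    (hyJmem : yJ⁻¹ * y ∈ ParabolicSubgroup cs J)
    (hgt : BruhatLT cs u yJ) :
    ∃ a : W, IsMinRep cs J a ∧ BruhatCovBy cs u a ∧ BruhatLE cs a yJ ∧
      a ∈ AtomSet cs J u v ∧ BruhatLE cs a y :=
  exists_atom_le_general cs J u v hu y hy yJ hyJ hyJmem hgt

end KL
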